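/- If there exists a function μ̃: 𝓑 → [0,∞) satisfying the cluster-expansion condition μ̃(B) ≥ p(B) · Σ_{I ∈ stab(B)} Π_{A ∈ I} μ̃(A) for all B ∈ 𝓑, then for every stable set I one has μ(I) ≤ Π_{B ∈ I} μ̃(B); in particular the Shearer criterion holds and μ(B) ≤ μ̃(B) for all B. -/

import Mathlib

open scoped ENNReal BigOperators Classical

noncomputable section

variable {β : Type*}

/-- A set of bad-events is stable if no two distinct members are dependent. -/
def IsStable (dep : β → β → Prop) (I : Finset β) : Prop :=
  ∀ A ∈ I, ∀ B ∈ I, A ≠ B → ¬ dep A B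

/-- Inclusive neighborhood Γ̄(B) = Γ(B) ∪ {B}. -/
def inclNbhd [Fintype β] (dep : β → β → Prop) (B : β) : Finset β :=
  Finset.univ.filter fun A => A = B ∨ dep A B

/-- Neighborhood Γ(B). -/
def nbhd [Fintype β] (dep : β → β → Prop) (B : β) : Finset β :=
  Finset.univ.filter fun A => A ≠ B ∧ dep A B

/-- stab(I): all stable subsets of ⋃_{B ∈ I} Γ̄(B). -/
def stab [Fintype β] (dep : β → β → Prop) (I : Finset β) : Finset (Finset β) :=
  Finset.univ.filter fun J => IsStable dep J ∧ J ⊆ I.biUnion (inclNbhd dep)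

/-- A stable-set sequence rooted at `I`. -/
structure StableSeq [Fintype β] (dep : β → β → Prop) (I : Finset β) where
  seq : ℕ → Finset β
  root : seq 0 = I
  stable : ∀ i, IsStable dep (seq i)
  step : ∀ i, seq (i + 1) ∈ stab dep (seq i)
  fin : ∃ ℓ, seq ℓ = ∅

/-- The depth of a stable-set sequence: the least ℓ with S_ℓ = ∅. -/
def StableSeq.depth [Fintype β] {dep : β → β → Prop} {I : Finset β}
    (S : StableSeq dep I) : ℕ :=
  Nat.find S.fin

/-- The weight Π_i p(S_i) of a stable-set sequence. -/
def StableSeq.weight [Fintype β] {dep : β → β → Prop} {I : Finset β}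
    (p : β → ℝ≥0∞) (S : StableSeq dep I) : ℝ≥0∞ :=
  ∏ i ∈ Finset.range S.depth, ∏ B ∈ S.seq i, p B

/-- μ(I): total weight of all stable-set sequences rooted at I. -/
def mu [Fintype β] (dep : β → β → Prop) (p : β → ℝ≥0∞) (I : Finset β) : ℝ≥0∞ :=
  ∑' S : StableSeq dep I, S.weight p

/-- μ^{(h)}(I): total weight of stable-set sequences rooted at I of depth ≤ h. -/
def muD [Fintype β] (dep : β → β → Prop) (p : β → ℝ≥0∞) (I : Finset β) (h : ℕ) : ℝ≥0∞ :=
  ∑' S : {S : StableSeq dep I // S.depth ≤ h}, S.1.weight p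

/-- α(B) = Σ_{J ∈ stab(B)} μ(J). -/
def alphaB [Fintype β] (dep : β → β → Prop) (p : β → ℝ≥0∞) (B : β) : ℝ≥0∞ :=
  ∑ J ∈ stab dep {B}, mu dep p J

/-- The Shearer criterion: μ(B) < ∞ for all bad-events B. -/
def ShearerCrit [Fintype β] (dep : β → β → Prop) (p : β → ℝ≥0∞) : Prop :=
  ∀ B : β, mu dep p {B} < ⊤

----------------------------------------------------------------
section Aux
variable [Fintype β] {dep : β → β → Prop} {I : Finset β}

@[ext] lemma StableSeq.ext' {S T : StableSeq dep I} (h : S.seq = T.seq) : S = T := by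
  cases S; cases T; simp_all

lemma mem_stab_iff {J : Finset β} :
    J ∈ stab dep I ↔ IsStable dep J ∧ J ⊆ I.biUnion (inclNbhd dep) := by
  simp [stab]

lemma mem_stab_empty {J : Finset β} : J ∈ stab dep (∅ : Finset β) ↔ J = ∅ := by
  simp [mem_stab_iff, Finset.subset_empty, IsStable]
  intro h; simp [h, IsStable]

lemma StableSeq.seq_depth (S : StableSeq dep I) : S.seq S.depth = ∅ :=
  Nat.find_spec S.fin

lemma StableSeq.depth_pos (S : StableSeq dep I) (hI : I ≠ ∅) : 0 < S.depth := by
  apply Nat.pos_of_ne_zero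
  intro h
  have h2 := S.seq_depth
  rw [h, S.root] at h2
  exact hI h2

lemma StableSeq.seq_succ_empty (S : StableSeq dep I) {i : ℕ} (h : S.seq i = ∅) :
    S.seq (i + 1) = ∅ := by
  have := S.step i
  rw [h, mem_stab_empty] at this
  exact this

def StableSeq.tail (S : StableSeq dep I) : StableSeq dep (S.seq 1) where
  seq := fun i => S.seq (i + 1)
  root := rfl
  stable := fun i => S.stable (i + 1)
  step := fun i => S.step (i + 1)
  fin := ⟨S.depth, S.seq_succ_empty S.seq_depth⟩

lemma StableSeq.depth_tail (S : StableSeq dep I) (hI : I ≠ ∅) :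
    S.depth = S.tail.depth + 1 := by
  have h1 : S.tail.depth ≤ S.depth - 1 := by
    apply Nat.find_le
    show S.seq (S.depth - 1 + 1) = ∅
    have h3 : S.depth - 1 + 1 = S.depth := Nat.succ_pred_eq_of_pos (S.depth_pos hI)
    rw [h3]
    exact S.seq_depth
  have h2 : S.depth ≤ S.tail.depth + 1 := by
    apply Nat.find_le
    exact Nat.find_spec S.tail.fin
  have hp : 0 < S.depth := S.depth_pos hI
  omega

lemma StableSeq.weight_tail (S : StableSeq dep I) (hI : I ≠ ∅) (p : β → ℝ≥0∞) :
    S.weight p = (∏ B ∈ I, p B) * S.tail.weight p := by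
  unfold StableSeq.weight
  rw [S.depth_tail hI, Finset.prod_range_succ']
  rw [S.root, mul_comm]
  rfl

lemma StableSeq.seq_one_mem (S : StableSeq dep I) : S.seq 1 ∈ stab dep I := by
  have := S.step 0
  rwa [S.root] at this

/-- The unique stable-set sequence rooted at ∅. -/
instance : Unique (StableSeq dep (∅ : Finset β)) where
  default :=
    { seq := fun _ => ∅
      root := rfl
      stable := fun _ A hA => absurd hA (by simp)
      step := fun _ => mem_stab_empty.2 rfl
      fin := ⟨0, rfl⟩ }
  uniq := by
    intro S
    apply StableSeq.ext'
    funext n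
    induction n with
    | zero => exact S.root
    | succ i ih => exact S.seq_succ_empty ih

lemma mu_empty (p : β → ℝ≥0∞) : mu dep p (∅ : Finset β) = 1 := by
  rw [mu, tsum_eq_single (default : StableSeq dep ∅) (fun b hb => absurd (Unique.uniq _ b) hb)]
  have hd : (default : StableSeq dep (∅ : Finset β)).depth = 0 := by
    simp [StableSeq.depth, Nat.find_eq_zero]
    rfl
  simp [StableSeq.weight, hd]

lemma muD_le_mu (p : β → ℝ≥0∞) (h : ℕ) : muD dep p I h ≤ mu dep p I :=
  ENNReal.tsum_comp_le_tsum_of_injective Subtype.val_injective _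

lemma muD_zero_of_ne (p : β → ℝ≥0∞) (hI : I ≠ ∅) : muD dep p I 0 = 0 := by
  have : IsEmpty {S : StableSeq dep I // S.depth ≤ 0} := by
    constructor
    rintro ⟨S, hS⟩
    exact absurd (Nat.le_zero.1 hS ▸ S.depth_pos hI) (by simp)
  rw [muD, tsum_empty]

lemma muD_succ_le (p : β → ℝ≥0∞) (hI : I ≠ ∅) (h : ℕ) :
    muD dep p I (h + 1) ≤ (∏ B ∈ I, p B) * ∑ J ∈ stab dep I, muD dep p J h := by
  classical
  set Φ : {S : StableSeq dep I // S.depth ≤ h + 1} →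
      Σ J : {J // J ∈ stab dep I}, {T : StableSeq dep J.1 // T.depth ≤ h} :=
    fun S => ⟨⟨S.1.seq 1, S.1.seq_one_mem⟩,
      ⟨S.1.tail, by have := S.1.depth_tail hI; omega⟩⟩ with hΦ
  have hinj : Function.Injective Φ := by
    intro S S' hEq
    apply Subtype.ext; apply StableSeq.ext'
    funext n
    cases n with
    | zero => rw [S.1.root, S'.1.root]
    | succ i => exact congrArg (fun x => x.2.1.seq i) hEq
  calc muD dep p I (h + 1)
      = ∑' S : {S : StableSeq dep I // S.depth ≤ h + 1},
          (fun x : Σ J : {J // J ∈ stab dep I}, {T : StableSeq dep J.1 // T.depth ≤ h} =>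
            (∏ B ∈ I, p B) * x.2.1.weight p) (Φ S) := by
        apply tsum_congr; intro S
        exact S.1.weight_tail hI p
    _ ≤ ∑' x : Σ J : {J // J ∈ stab dep I}, {T : StableSeq dep J.1 // T.depth ≤ h},
          (∏ B ∈ I, p B) * x.2.1.weight p :=
        ENNReal.tsum_comp_le_tsum_of_injective hinj _
    _ = ∑' (J : {J // J ∈ stab dep I}) (T : {T : StableSeq dep J.1 // T.depth ≤ h}),
          (∏ B ∈ I, p B) * T.1.weight p := ENNReal.tsum_sigma' _
    _ = ∑' (J : {J // J ∈ stab dep I}), (∏ B ∈ I, p B) * muD dep p J.1 h := by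
        apply tsum_congr; intro J
        rw [ENNReal.tsum_mul_left]; rfl
    _ = ∑ J ∈ stab dep I, (∏ B ∈ I, p B) * muD dep p J h := by
        rw [tsum_fintype]
        exact Finset.sum_coe_sort (stab dep I) (fun J => (∏ B ∈ I, p B) * muD dep p J h)
    _ = (∏ B ∈ I, p B) * ∑ J ∈ stab dep I, muD dep p J h := by
        rw [Finset.mul_sum]

/-- representative choice: for A in the union of neighborhoods of I, pick B ∈ I
with A ∈ Γ̄(B). -/
def rep (dep : β → β → Prop) (I : Finset β) (A : β) : β :=
  if h : ∃ B ∈ I, A ∈ inclNbhd dep B then h.choose else A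

lemma rep_spec {A : β} (hA : A ∈ I.biUnion (inclNbhd dep)) :
    rep dep I A ∈ I ∧ A ∈ inclNbhd dep (rep dep I A) := by
  rw [Finset.mem_biUnion] at hA
  rw [rep, dif_pos hA]
  exact ⟨hA.choose_spec.1, hA.choose_spec.2⟩

lemma isStable_subset {J J' : Finset β} (h : J' ⊆ J) (hJ : IsStable dep J) :
    IsStable dep J' := fun A hA B hB => hJ A (h hA) B (h hB)

lemma stab_sum_le (f : β → ℝ≥0∞) :
    ∑ J ∈ stab dep I, ∏ A ∈ J, f A ≤ ∏ B ∈ I, ∑ J ∈ stab dep {B}, ∏ A ∈ J, f A := by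
  classical
  rw [Finset.prod_sum]
  set Φ : Finset β → (∀ a ∈ I, Finset β) :=
    fun J => fun B _ => J.filter (fun A => rep dep I A = B) with hΦ
  have hmaps : ∀ J ∈ stab dep I, Φ J ∈ I.pi (fun B => stab dep {B}) := by
    intro J hJ
    rw [Finset.mem_pi]
    intro B hB
    rw [mem_stab_iff] at hJ ⊢
    refine ⟨isStable_subset (Finset.filter_subset _ _) hJ.1, ?_⟩
    intro A hA
    rw [Finset.mem_filter] at hA
    rw [Finset.singleton_biUnion]
    rw [← hA.2]
    exact (rep_spec (hJ.2 hA.1)).2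
  have hval : ∀ J ∈ stab dep I,
      ∏ A ∈ J, f A = ∏ x ∈ I.attach, ∏ A ∈ Φ J x.1 x.2, f A := by
    intro J hJ
    rw [mem_stab_iff] at hJ
    rw [Finset.prod_attach I (fun B => ∏ A ∈ J.filter (fun A => rep dep I A = B), f A)]
    rw [Finset.prod_fiberwise_of_maps_to (fun A hA => (rep_spec (hJ.2 hA)).1)]
  have hinj : ∀ J ∈ stab dep I, ∀ J' ∈ stab dep I, Φ J = Φ J' → J = J' := by
    intro J hJ J' hJ' hEq
    rw [mem_stab_iff] at hJ hJ'
    ext A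
    constructor
    · intro hA
      have hr := (rep_spec (hJ.2 hA)).1
      have : A ∈ Φ J (rep dep I A) hr := by
        simp [hΦ, hA]
      rw [hEq] at this
      exact (Finset.mem_filter.1 this).1
    · intro hA
      have hr := (rep_spec (hJ'.2 hA)).1
      have : A ∈ Φ J' (rep dep I A) hr := by
        simp [hΦ, hA]
      rw [← hEq] at this
      exact (Finset.mem_filter.1 this).1
  calc ∑ J ∈ stab dep I, ∏ A ∈ J, f A
      = ∑ J ∈ stab dep I, ∏ x ∈ I.attach, ∏ A ∈ Φ J x.1 x.2, f A :=
        Finset.sum_congr rfl hval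
    _ = ∑ g ∈ (stab dep I).image Φ, ∏ x ∈ I.attach, ∏ A ∈ g x.1 x.2, f A := by
        rw [Finset.sum_image hinj]
    _ ≤ ∑ g ∈ I.pi (fun B => stab dep {B}), ∏ x ∈ I.attach, ∏ A ∈ g x.1 x.2, f A := by
        apply Finset.sum_le_sum_of_subset
        intro g hg
        rw [Finset.mem_image] at hg
        obtain ⟨J, hJ, rfl⟩ := hg
        exact hmaps J hJ

end Aux


/-- the cluster-expansion criterion implies μ(I) ≤ Π_{B∈I} μ̃(B) for
every stable set I; in particular the Shearer criterion holds and μ(B) ≤ μ̃(B). -/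
theorem cluster_expansion_implies_Shearer [Fintype β] (dep : β → β → Prop)
    (hsym : Symmetric dep) (p : β → ℝ≥0∞) (μt : β → NNReal)
    (hcrit : ∀ B : β, p B * ∑ I ∈ stab dep {B}, ∏ A ∈ I, (μt A : ℝ≥0∞) ≤ (μt B : ℝ≥0∞)) :
    (∀ I : Finset β, IsStable dep I → mu dep p I ≤ ∏ B ∈ I, (μt B : ℝ≥0∞)) ∧
      ShearerCrit dep p ∧ ∀ B : β, mu dep p {B} ≤ (μt B : ℝ≥0∞) := by
  classical
  -- main bound for muD by induction on depth
  have key : ∀ h : ℕ, ∀ I : Finset β, muD dep p I h ≤ ∏ B ∈ I, (μt B : ℝ≥0∞) := by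
    intro h
    induction h with
    | zero =>
      intro I
      rcases eq_or_ne I ∅ with rfl | hI
      · calc muD dep p ∅ 0 ≤ mu dep p ∅ := muD_le_mu p 0
          _ = 1 := mu_empty p
          _ = _ := by simp
      · rw [muD_zero_of_ne p hI]; exact zero_le
    | succ h ih =>
      intro I
      rcases eq_or_ne I ∅ with rfl | hI
      · calc muD dep p ∅ (h+1) ≤ mu dep p ∅ := muD_le_mu p _
          _ = 1 := mu_empty p
          _ = _ := by simp
      · calc muD dep p I (h + 1)
            ≤ (∏ B ∈ I, p B) * ∑ J ∈ stab dep I, muD dep p J h := muD_succ_le p hI h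
          _ ≤ (∏ B ∈ I, p B) * ∑ J ∈ stab dep I, ∏ A ∈ J, (μt A : ℝ≥0∞) := by
              gcongr with J hJ
              exact ih J
          _ ≤ (∏ B ∈ I, p B) * ∏ B ∈ I, ∑ J ∈ stab dep {B}, ∏ A ∈ J, (μt A : ℝ≥0∞) := by
              gcongr
              exact stab_sum_le _
          _ = ∏ B ∈ I, (p B * ∑ J ∈ stab dep {B}, ∏ A ∈ J, (μt A : ℝ≥0∞)) := by
              rw [Finset.prod_mul_distrib]
          _ ≤ ∏ B ∈ I, (μt B : ℝ≥0∞) := Finset.prod_le_prod' fun B _ => hcrit B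
  -- from muD to mu
  have main : ∀ I : Finset β, mu dep p I ≤ ∏ B ∈ I, (μt B : ℝ≥0∞) := by
    intro I
    rw [mu, ENNReal.tsum_eq_iSup_sum]
    apply iSup_le
    intro F
    set h := F.sup StableSeq.depth with hh
    set ι : {S // S ∈ F} → {S : StableSeq dep I // S.depth ≤ h} :=
      fun x => ⟨x.1, Finset.le_sup x.2⟩ with hι
    have hιinj : Function.Injective ι := by
      intro a b hab
      simp only [hι, Subtype.mk.injEq] at hab
      exact Subtype.ext hab
    calc ∑ S ∈ F, S.weight p
        = ∑ x ∈ F.attach, x.1.weight p := (Finset.sum_attach F _).symm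
      _ = ∑' x : {S // S ∈ F}, x.1.weight p := (tsum_fintype _).symm
      _ = ∑' x : {S // S ∈ F},
            (fun y : {S : StableSeq dep I // S.depth ≤ h} => y.1.weight p) (ι x) := rfl
      _ ≤ muD dep p I h := ENNReal.tsum_comp_le_tsum_of_injective hιinj _
      _ ≤ _ := key h I
  refine ⟨fun I _ => main I, fun B => ?_, fun B => ?_⟩
  · calc mu dep p {B} ≤ ∏ B' ∈ {B}, (μt B' : ℝ≥0∞) := main {B}
      _ = (μt B : ℝ≥0∞) := by simp
      _ < ⊤ := ENNReal.coe_lt_top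
  · calc mu dep p {B} ≤ ∏ B' ∈ {B}, (μt B' : ℝ≥0∞) := main {B}
      _ = (μt B : ℝ≥0∞) := by simp
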